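/- arXiv:1911.06056 — 12 statements merged into one kernel-verified Lean document; each statement's English description precedes it below -/
import Mathlib

section
/- Lemma (operators from face paths between boundary faces, Lemma 1 of the paper): Let (f₁, …, f_m; ν₁, …, ν_{m−1}) be a face path with m ≥ 2 whose two end faces are boundary faces, i.e. (ι f₁).card = 1 and (ι f_m).card = 1. Then for every volume ν, the number of indices i ∈ {1, …, m} with ν ∈ ι f_i is even. (This is exactly the condition that the Z-type operator supported on the faces of the path commutes with every volume stabilizer A_ν of the 3D toric code, hence is a stabilizer or a logical operator.) -/
/-!
Each interior face `f i` of the path contains the two distinct volumes `v (i-1)` and `v i`, so by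
`(ι (f i)).card ≤ 2` it is incident on exactly these; each end face is incident on exactly its one
path volume. Hence a volume is incident on a face of the path iff it is some `v k`, and then
(the `v k` being distinct) exactly on the two faces `f k` and `f (k+1)`.
-/

/-- A face path of length `m ≥ 1` in a 3D lattice: faces `f 0, …, f (m-1)` together with
pairwise distinct volumes `v 0, …, v (m-2)` such that `v i` is incident on both
`f i` and `f (i+1)`.  Here `ι g` is the set of volumes a face `g` is incident on. -/
structure FacePath {Faces Volumes : Type*} (ι : Faces → Finset Volumes) (m : ℕ) where
  f : ℕ → Faces
  v : ℕ → Volumes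
  one_le : 1 ≤ m
  mem_left : ∀ i, i + 1 < m → v i ∈ ι (f i)
  mem_right : ∀ i, i + 1 < m → v i ∈ ι (f (i + 1))
  distinct : ∀ i j, i + 1 < m → j + 1 < m → i ≠ j → v i ≠ v j

namespace FacePath

variable {Faces Volumes : Type*} {ι : Faces → Finset Volumes} {m : ℕ} (p : FacePath ι m)

theorem eq_of_v_eq {k l : ℕ} (hk : k + 1 < m) (hl : l + 1 < m) (h : p.v k = p.v l) : k = l := by
  by_contra hne
  exact p.distinct k l hk hl hne h

theorem mem_iff_eq_of_card_eq_one {i k : ℕ} (hv : p.v k ∈ ι (p.f i))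
    (h : (ι (p.f i)).card = 1) (ν : Volumes) : ν ∈ ι (p.f i) ↔ ν = p.v k :=
  ⟨fun hν => Finset.card_le_one.mp h.le ν hν _ hv, fun hν => hν ▸ hv⟩

theorem mem_iff_of_card_le_two [DecidableEq Volumes] {i : ℕ} (hi₀ : 0 < i) (hi : i + 1 < m)
    (h : (ι (p.f i)).card ≤ 2) (ν : Volumes) :
    ν ∈ ι (p.f i) ↔ ν = p.v (i - 1) ∨ ν = p.v i := by
  have hprev : p.v (i - 1) ∈ ι (p.f i) := by
    simpa [Nat.sub_add_cancel hi₀] using p.mem_right (i - 1) (by omega)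
  have hne : p.v (i - 1) ≠ p.v i := p.distinct _ _ (by omega) hi (by omega)
  have hpair : {p.v (i - 1), p.v i} = ι (p.f i) :=
    Finset.eq_of_subset_of_card_le (Finset.insert_subset hprev
      (Finset.singleton_subset_iff.mpr (p.mem_left i hi))) (by rwa [Finset.card_pair hne])
  rw [← hpair, Finset.mem_insert, Finset.mem_singleton]

theorem mem_iff_exists_v_eq [DecidableEq Volumes] (hcard : ∀ i, (ι (p.f i)).card ≤ 2)
    (hm : 2 ≤ m) (h1 : (ι (p.f 0)).card = 1) (h2 : (ι (p.f (m - 1))).card = 1)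
    {i : ℕ} (hi : i < m) (ν : Volumes) :
    ν ∈ ι (p.f i) ↔ ∃ k, k + 1 < m ∧ p.v k = ν ∧ (i = k ∨ i = k + 1) := by
  constructor
  · intro hν
    rcases Nat.eq_zero_or_pos i with rfl | hi₀
    · have := (p.mem_iff_eq_of_card_eq_one (p.mem_left 0 (by omega)) h1 ν).mp hν
      exact ⟨0, by omega, this.symm, .inl rfl⟩
    rcases eq_or_ne i (m - 1) with rfl | hlast
    · have hv : p.v (m - 2) ∈ ι (p.f (m - 1)) := by
        simpa [show m - 2 + 1 = m - 1 by omega] using p.mem_right (m - 2) (by omega)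
      have := (p.mem_iff_eq_of_card_eq_one hv h2 ν).mp hν
      exact ⟨m - 2, by omega, this.symm, .inr (by omega)⟩
    rcases (p.mem_iff_of_card_le_two hi₀ (by omega) (hcard i) ν).mp hν with h | h
    · exact ⟨i - 1, by omega, h.symm, .inr (by omega)⟩
    · exact ⟨i, by omega, h.symm, .inl rfl⟩
  · rintro ⟨k, hk, rfl, rfl | rfl⟩
    · exact p.mem_left _ hk
    · exact p.mem_right k hk

end FacePath

theorem face_path_between_boundaries_even_incidence_general
    {Faces Volumes : Type*} [DecidableEq Volumes]
    (ι : Faces → Finset Volumes)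
    (hcard : ∀ f, 1 ≤ (ι f).card ∧ (ι f).card ≤ 2)
    (m : ℕ) (hm : 2 ≤ m) (p : FacePath ι m)
    (h1 : (ι (p.f 0)).card = 1) (h2 : (ι (p.f (m - 1))).card = 1) :
    ∀ ν : Volumes,
      Even (((Finset.range m).filter (fun i => ν ∈ ι (p.f i))).card) := by
  intro ν
  have hmem := fun i (hi : i < m) => p.mem_iff_exists_v_eq (fun _ => (hcard _).2) hm h1 h2 hi ν
  by_cases hν : ∃ k, k + 1 < m ∧ p.v k = ν
  · obtain ⟨k, hk, rfl⟩ := hν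
    have hpair : (Finset.range m).filter (fun i => p.v k ∈ ι (p.f i)) = {k, k + 1} := by
      ext i
      simp only [Finset.mem_filter, Finset.mem_range, Finset.mem_insert, Finset.mem_singleton]
      constructor
      · rintro ⟨hi, hik⟩
        obtain ⟨l, hl, hlk, hil⟩ := (hmem i hi).mp hik
        rwa [p.eq_of_v_eq hl hk hlk] at hil
      · rintro (rfl | rfl)
        · exact ⟨by omega, p.mem_left _ hk⟩
        · exact ⟨hk, p.mem_right _ hk⟩
    rw [hpair, Finset.card_pair (by omega)]
    exact even_two
  · have hempty : (Finset.range m).filter (fun i => ν ∈ ι (p.f i)) = ∅ :=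
      Finset.filter_eq_empty_iff.mpr fun i hi hi' =>
        let ⟨k, hk, hkν, _⟩ := (hmem i (Finset.mem_range.mp hi)).mp hi'
        hν ⟨k, hk, hkν⟩
    rw [hempty, Finset.card_empty]
    exact Even.zero

/-- Lemma 1 (operators from face paths between boundary faces): if both end faces of a
face path are boundary faces (incident on exactly one volume), then every volume is
incident on an even number of faces of the path; hence the corresponding `Z`-type
operator commutes with every volume stabilizer. -/
theorem face_path_between_boundaries_even_incidence
    {Faces Volumes : Type*} [Fintype Faces] [Fintype Volumes] [DecidableEq Volumes]
    (ι : Faces → Finset Volumes)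
    (hcard : ∀ f, 1 ≤ (ι f).card ∧ (ι f).card ≤ 2)
    (m : ℕ) (hm : 2 ≤ m) (p : FacePath ι m)
    (h1 : (ι (p.f 0)).card = 1) (h2 : (ι (p.f (m - 1))).card = 1) :
    ∀ ν : Volumes,
      Even (((Finset.range m).filter (fun i => ν ∈ ι (p.f i))).card) :=
  face_path_between_boundaries_even_incidence_general ι hcard m hm p h1 h2
end

section
/- Lemma (operators from simple face cycles, Lemma 2 of the paper): Let (f₁, …, f_m; ν₁, …, ν_{m−1}) be a face path with m ≥ 2, and suppose there is a volume ν₀ with ν₀ ∉ {ν₁, …, ν_{m−1}}, ν₀ ∈ ι f₁ and ν₀ ∈ ι f_m (so the path is a simple face cycle closing through ν₀). Then for every volume ν, the number of indices i ∈ {1, …, m} with ν ∈ ι f_i is even. (Hence the corresponding Z-type operator commutes with every volume stabilizer A_ν of the 3D toric code and is a stabilizer or a logical operator.) -/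
/-! A face lies on exactly the two volumes preceding and following it around the cycle, so the
faces of the cycle are the edges of a closed walk in which consecutive vertices (volumes) differ.
Counting incidences with a volume `ν` edge by edge, every visit of the walk to `ν` is counted once
by the face entering `ν` and once by the face leaving it. -/

open Finset

theorem Finset.eq_pair_of_mem_of_card_le_two {α : Type*} [DecidableEq α] {s : Finset α} {a b : α}
    (ha : a ∈ s) (hb : b ∈ s) (hab : a ≠ b) (hs : #s ≤ 2) : s = {a, b} :=
  (eq_of_subset_of_card_le (insert_subset ha (singleton_subset_iff.2 hb))
    (hs.trans (card_pair hab).ge)).symm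

theorem Finset.sum_range_comp_succ_of_eq {M : Type*} [AddCancelCommMonoid M] (g : ℕ → M) {m : ℕ}
    (h : g m = g 0) : ∑ i ∈ range m, g (i + 1) = ∑ i ∈ range m, g i := by
  have := (sum_range_succ' g m).symm.trans (sum_range_succ g m)
  rwa [h, add_left_inj] at this

theorem even_card_filter_mem_of_closed_walk {α : Type*} [DecidableEq α] (s : ℕ → Finset α)
    (a : ℕ → α) (m : ℕ) (hclosed : a m = a 0) (hcard : ∀ i < m, #(s i) ≤ 2)
    (hleft : ∀ i < m, a i ∈ s i) (hright : ∀ i < m, a (i + 1) ∈ s i)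
    (hne : ∀ i < m, a i ≠ a (i + 1)) (x : α) : Even #{i ∈ range m | x ∈ s i} := by
  have hincidence : ∀ i ∈ range m, (if x ∈ s i then 1 else 0) =
      (if a i = x then 1 else 0) + (if a (i + 1) = x then 1 else 0) := by
    intro i hi
    have hi := mem_range.1 hi
    rw [eq_pair_of_mem_of_card_le_two (hleft i hi) (hright i hi) (hne i hi) (hcard i hi)]
    simp only [mem_insert, mem_singleton, eq_comm (a := x)]
    have := hne i hi
    split_ifs <;> simp_all
  rw [card_filter, sum_congr rfl hincidence, sum_add_distrib,
    sum_range_comp_succ_of_eq (fun i => if a i = x then 1 else 0) (by rw [hclosed])]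
  exact ⟨_, rfl⟩

namespace FacePath

variable {Faces Volumes : Type*} {ι : Faces → Finset Volumes} {m : ℕ} (p : FacePath ι m)
  (ν₀ : Volumes)

/-- The paper's `ν_i` with indices taken mod `m`: the volume shared by faces `i - 1` and `i` of
the cycle closed up through `ν₀`. -/
def cycleVolume (i : ℕ) : Volumes :=
  if 0 < i ∧ i < m then p.v (i - 1) else ν₀

theorem cycleVolume_zero : p.cycleVolume ν₀ 0 = ν₀ := by
  simp [cycleVolume]

theorem cycleVolume_self : p.cycleVolume ν₀ m = ν₀ := by
  simp [cycleVolume]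

theorem cycleVolume_mem (hfirst : ν₀ ∈ ι (p.f 0)) {i : ℕ} (hi : i < m) :
    p.cycleVolume ν₀ i ∈ ι (p.f i) := by
  unfold cycleVolume
  split_ifs with h
  · simpa [Nat.sub_add_cancel h.1] using p.mem_right (i - 1) (by omega)
  · obtain rfl : i = 0 := by omega
    exact hfirst

theorem cycleVolume_succ_mem (hlast : ν₀ ∈ ι (p.f (m - 1))) {i : ℕ} (hi : i < m) :
    p.cycleVolume ν₀ (i + 1) ∈ ι (p.f i) := by
  unfold cycleVolume
  split_ifs with h
  · exact p.mem_left i h.2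
  · obtain rfl : i = m - 1 := by omega
    exact hlast

theorem cycleVolume_ne_succ (hm : 2 ≤ m) (hnotmid : ∀ i, i + 1 < m → p.v i ≠ ν₀) {i : ℕ}
    (hi : i < m) : p.cycleVolume ν₀ i ≠ p.cycleVolume ν₀ (i + 1) := by
  unfold cycleVolume
  split_ifs with h₀ h₁ h₁
  · exact p.distinct _ _ (by omega) h₁.2 (by omega)
  · exact hnotmid _ (by omega)
  · exact (hnotmid i h₁.2).symm
  · omega

end FacePath

theorem simple_face_cycle_even_incidence_general
    {Faces Volumes : Type*} [DecidableEq Volumes]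
    (ι : Faces → Finset Volumes)
    (hcard : ∀ f, 1 ≤ (ι f).card ∧ (ι f).card ≤ 2)
    (m : ℕ) (hm : 2 ≤ m) (p : FacePath ι m)
    (ν₀ : Volumes)
    (hnotmid : ∀ i, i + 1 < m → p.v i ≠ ν₀)
    (hfirst : ν₀ ∈ ι (p.f 0)) (hlast : ν₀ ∈ ι (p.f (m - 1))) :
    ∀ ν : Volumes,
      Even (((Finset.range m).filter (fun i => ν ∈ ι (p.f i))).card) :=
  even_card_filter_mem_of_closed_walk (fun i => ι (p.f i)) (p.cycleVolume ν₀) m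
    ((p.cycleVolume_self ν₀).trans (p.cycleVolume_zero ν₀).symm) (fun i _ => (hcard (p.f i)).2)
    (fun _ => p.cycleVolume_mem ν₀ hfirst) (fun _ => p.cycleVolume_succ_mem ν₀ hlast)
    (fun _ => p.cycleVolume_ne_succ ν₀ hm hnotmid)

/-- Lemma 2 (operators from simple face cycles): if a face path closes up through a
volume `ν₀` distinct from all the intermediate volumes and incident on both its first
and last face, then every volume is incident on an even number of faces of the path;
hence the corresponding `Z`-type operator commutes with every volume stabilizer. -/
theorem simple_face_cycle_even_incidence
    {Faces Volumes : Type*} [Fintype Faces] [Fintype Volumes] [DecidableEq Volumes]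
    (ι : Faces → Finset Volumes)
    (hcard : ∀ f, 1 ≤ (ι f).card ∧ (ι f).card ≤ 2)
    (m : ℕ) (hm : 2 ≤ m) (p : FacePath ι m)
    (ν₀ : Volumes)
    (hnotmid : ∀ i, i + 1 < m → p.v i ≠ ν₀)
    (hfirst : ν₀ ∈ ι (p.f 0)) (hlast : ν₀ ∈ ι (p.f (m - 1))) :
    ∀ ν : Volumes,
      Even (((Finset.range m).filter (fun i => ν ∈ ι (p.f i))).card) :=
  simple_face_cycle_even_incidence_general ι hcard m hm p ν₀ hnotmid hfirst hlast
end

section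
/- Lemma (the X-operator of a boundary equivalence class commutes with all edge checks; first part of Lemma 4 of the paper): Let e be an edge such that the set I e can be arranged into a face path: there is a face path (g₁, …, g_m; ν₁, …, ν_{m−1}) with m ≥ 2 in which the faces g₁, …, g_m are pairwise distinct and {g₁, …, g_m} = I e, such that every boundary face belonging to I e lies in {g₁, g_m} and g₁ is a boundary face if and only if g_m is a boundary face. Then for every boundary face f, the number of faces g ∈ I e with g ≈ f is even (it equals 0 or 2). In particular, for every ≈-equivalence class F_i of boundary faces, (F_i ∩ I e).card is even, so the X-type operator X_{F_i} commutes with the Z-stabilizer B_e. -/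
/-- `chi f m g` is the parity (in `ZMod 2`) of the number of indices `i < m` with
`f i = g`; this is the `ZMod 2` vector of the list of faces `f 0, …, f (m-1)`. -/
def chi {Faces : Type*} [DecidableEq Faces] (f : ℕ → Faces) (m : ℕ) : Faces → ZMod 2 :=
  fun g => (((Finset.range m).filter (fun i => f i = g)).card : ZMod 2)

/-- The `ZMod 2` indicator vector of a finite set of faces. -/
def ind {Faces : Type*} [DecidableEq Faces] (A : Finset Faces) : Faces → ZMod 2 :=
  fun g => if g ∈ A then 1 else 0

/-- The `Z`-stabilizer subspace: the `ℤ/2`-span of the indicator vectors of the sets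
`I e` of faces incident on each edge `e`. -/
def ZStab {Faces Edges : Type*} [DecidableEq Faces] (I : Edges → Finset Faces) :
    Submodule (ZMod 2) (Faces → ZMod 2) :=
  Submodule.span (ZMod 2) {x : Faces → ZMod 2 | ∃ e : Edges, x = ind (I e)}

/-- Two boundary faces are face-equivalent if some face path (of length at least two)
joins them and its `χ`-vector lies in the `Z`-stabilizer subspace. -/
def FaceEquivStep {Faces Volumes Edges : Type*} [DecidableEq Faces]
    (ι : Faces → Finset Volumes) (I : Edges → Finset Faces) (f f' : Faces) : Prop :=
  (ι f).card = 1 ∧ (ι f').card = 1 ∧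
    ∃ (m : ℕ), 2 ≤ m ∧ ∃ p : FacePath ι m,
      p.f 0 = f ∧ p.f (m - 1) = f' ∧ chi p.f m ∈ ZStab I

open scoped Classical

open Finset

theorem Relation.EqvGen.iff_of_forall_rel_iff {α : Type*} {r : α → α → Prop} {P : α → Prop}
    (hr : ∀ a b, r a b → (P a ↔ P b)) {a b : α} (h : Relation.EqvGen r a b) : P a ↔ P b :=
  (Equivalence.eqvGen_iff (r := fun a b => P a ↔ P b) ⟨fun _ => Iff.rfl, Iff.symm, Iff.trans⟩).1
    (Relation.EqvGen.mono hr _ _ h)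

theorem Finset.even_card_of_subset_pair {α : Type*} [DecidableEq α] {s : Finset α} {a b : α}
    (hab : a ≠ b) (hs : s ⊆ {a, b}) (h : a ∈ s ↔ b ∈ s) : Even s.card := by
  by_cases ha : a ∈ s
  · rw [hs.antisymm (insert_subset ha (singleton_subset_iff.2 (h.1 ha))), card_pair hab]
    exact even_two
  · have : s = ∅ := eq_empty_of_forall_notMem fun x hx => by
      obtain rfl | rfl : x = a ∨ x = b := by simpa using hs hx
      · exact ha hx
      · exact ha (h.2 hx)
    rw [this, card_empty]
    exact Even.zero

theorem chi_eq_ind_image {Faces : Type*} [DecidableEq Faces] {f : ℕ → Faces} {m : ℕ}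
    (hf : Set.InjOn f (range m)) : chi f m = ind ((range m).image f) := by
  funext g
  have hle : ((range m).filter (f · = g)).card ≤ 1 := card_le_one.2 fun i hi j hj =>
    hf (mem_filter.1 hi).1 (mem_filter.1 hj).1 ((mem_filter.1 hi).2.trans (mem_filter.1 hj).2.symm)
  unfold chi ind
  split_ifs with hg
  · obtain ⟨i, hi, rfl⟩ := mem_image.1 hg
    have hpos : 0 < ((range m).filter (f · = f i)).card := card_pos.2 ⟨i, mem_filter.2 ⟨hi, rfl⟩⟩
    rw [show ((range m).filter (f · = f i)).card = 1 by omega, Nat.cast_one]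
  · rw [filter_false_of_mem fun i hi hfi => hg (mem_image.2 ⟨i, hi, hfi⟩), card_empty,
      Nat.cast_zero]

section

variable {Faces Volumes Edges : Type*} [DecidableEq Faces]
  {ι : Faces → Finset Volumes} {I : Edges → Finset Faces}

theorem card_eq_one_of_eqvGen_faceEquivStep {g f : Faces}
    (h : Relation.EqvGen (FaceEquivStep ι I) g f) (hf : (ι f).card = 1) : (ι g).card = 1 :=
  (h.iff_of_forall_rel_iff fun _ _ hab => iff_of_true hab.1 hab.2.1).2 hf

theorem faceEquivStep_of_injOn_of_image_eq {m : ℕ} (hm : 2 ≤ m) (p : FacePath ι m) (e : Edges)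
    (hinj : Set.InjOn p.f (range m)) (himg : (range m).image p.f = I e)
    (h0 : (ι (p.f 0)).card = 1) (hlast : (ι (p.f (m - 1))).card = 1) :
    FaceEquivStep ι I (p.f 0) (p.f (m - 1)) :=
  ⟨h0, hlast, m, hm, p, rfl, rfl,
    chi_eq_ind_image hinj ▸ himg ▸ Submodule.subset_span ⟨e, rfl⟩⟩

end

theorem edge_overlap_with_boundary_class_even_general
    {Faces Volumes Edges : Type*}
    [DecidableEq Faces]
    (ι : Faces → Finset Volumes) (I : Edges → Finset Faces)
    (e : Edges)
    (harr : ∃ (m : ℕ), 2 ≤ m ∧ ∃ p : FacePath ι m,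
      (∀ i j, i < m → j < m → i ≠ j → p.f i ≠ p.f j) ∧
      (Finset.range m).image p.f = I e ∧
      (∀ g ∈ I e, (ι g).card = 1 → g = p.f 0 ∨ g = p.f (m - 1)) ∧
      ((ι (p.f 0)).card = 1 ↔ (ι (p.f (m - 1))).card = 1)) :
    ∀ f : Faces, (ι f).card = 1 →
      Even (((I e).filter
        (fun g => Relation.EqvGen (FaceEquivStep ι I) g f)).card) := by
  obtain ⟨m, hm, p, hinj, himg, hbdry, hiff⟩ := harr
  intro f hf
  have hinjOn : Set.InjOn p.f (range m) := fun i hi j hj hij =>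
    by_contra fun hne => hinj i j (mem_range.1 hi) (mem_range.1 hj) hne hij
  have mem_Ie : ∀ i < m, p.f i ∈ I e := fun i hi => himg ▸ mem_image_of_mem _ (mem_range.2 hi)
  have boundary_of_mem : ∀ g ∈ (I e).filter (Relation.EqvGen (FaceEquivStep ι I) · f),
      (ι g).card = 1 := fun g hg => card_eq_one_of_eqvGen_faceEquivStep (mem_filter.1 hg).2 hf
  refine even_card_of_subset_pair (hinj 0 (m - 1) (by omega) (by omega) (by omega))
    (fun g hg => by simpa using hbdry g (mem_filter.1 hg).1 (boundary_of_mem g hg)) ?_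
  by_cases h0 : (ι (p.f 0)).card = 1
  · have hends := Relation.EqvGen.rel _ _
      (faceEquivStep_of_injOn_of_image_eq hm p e hinjOn himg h0 (hiff.1 h0))
    simp only [mem_filter, mem_Ie 0 (by omega), mem_Ie (m - 1) (by omega), true_and]
    exact ⟨(hends.symm _ _).trans _ _ _, hends.trans _ _ _⟩
  · exact iff_of_false (fun h => h0 (boundary_of_mem _ h))
      (fun h => h0 (hiff.2 (boundary_of_mem _ h)))

/-- First part of Lemma 4: let `e` be an edge such that `I e` can be arranged into a
face path of pairwise distinct faces whose boundary faces, if any, occur exactly at both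
ends.  Then for every boundary face `f`, the number of faces of `I e` equivalent to `f`
(under the equivalence relation `≈` generated by face-equivalence) is even; hence the
`X`-type operator of every equivalence class of boundary faces commutes with the
`Z`-stabilizer `B_e`. -/
theorem edge_overlap_with_boundary_class_even
    {Faces Volumes Edges : Type*} [Fintype Faces] [Fintype Volumes] [Fintype Edges]
    [DecidableEq Faces] [DecidableEq Volumes]
    (ι : Faces → Finset Volumes) (I : Edges → Finset Faces)
    (hcard : ∀ f, 1 ≤ (ι f).card ∧ (ι f).card ≤ 2)
    (e : Edges)
    (harr : ∃ (m : ℕ), 2 ≤ m ∧ ∃ p : FacePath ι m,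
      (∀ i j, i < m → j < m → i ≠ j → p.f i ≠ p.f j) ∧
      (Finset.range m).image p.f = I e ∧
      (∀ g ∈ I e, (ι g).card = 1 → g = p.f 0 ∨ g = p.f (m - 1)) ∧
      ((ι (p.f 0)).card = 1 ↔ (ι (p.f (m - 1))).card = 1)) :
    ∀ f : Faces, (ι f).card = 1 →
      Even (((I e).filter
        (fun g => Relation.EqvGen (FaceEquivStep ι I) g f)).card) :=
  edge_overlap_with_boundary_class_even_general ι I e harr
end

section
/- Lemma (odd overlap of a face path with one boundary class; second part of Lemma 4 of the paper): Let f and f′ be boundary faces with ¬(f ≈ f′), and let (f₁, …, f_m; ν₁, …, ν_{m−1}) with m ≥ 2 be a face path with f₁ = f and f_m = f′. Then there is exactly one index i ∈ {1, …, m} such that f_i is a boundary face satisfying f_i ≈ f (namely i = 1). In particular the number of such indices is odd, so the Z-type operator of this face path anticommutes with the X-type operator supported on the ≈-class of f, and hence that X-type operator is not a stabilizer. -/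
/-!
An interior face of a face path is incident on the two distinct volumes the path uses to enter
and to leave it, so the only boundary faces on a path are its endpoints. The last endpoint is
not `≈ f` by assumption, which leaves the first one.
-/

namespace FacePath

variable {Faces Volumes : Type*} {ι : Faces → Finset Volumes} {m : ℕ}

theorem one_lt_card_ι (p : FacePath ι m) {i : ℕ} (hi₀ : 0 < i) (hi : i + 1 < m) :
    1 < (ι (p.f i)).card := by
  obtain ⟨j, rfl⟩ := Nat.exists_eq_succ_of_ne_zero hi₀.ne'
  rw [Finset.one_lt_card]
  exact ⟨p.v j, p.mem_right j (by omega), p.v (j + 1), p.mem_left (j + 1) hi,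
    p.distinct _ _ (by omega) hi (by omega)⟩

theorem eq_zero_or_eq_last_of_card_ι_eq_one (p : FacePath ι m) {i : ℕ} (hi : i < m)
    (hb : (ι (p.f i)).card = 1) : i = 0 ∨ i = m - 1 := by
  by_contra! h
  exact (p.one_lt_card_ι (by omega) (by omega)).ne' hb

end FacePath

open scoped Classical

theorem face_path_odd_overlap_with_boundary_class_general
    {Faces Volumes Edges : Type*}
    [DecidableEq Faces]
    (ι : Faces → Finset Volumes) (I : Edges → Finset Faces)
    (f f' : Faces) (hf : (ι f).card = 1)
    (hne : ¬ Relation.EqvGen (FaceEquivStep ι I) f f')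
    (m : ℕ) (p : FacePath ι m)
    (h0 : p.f 0 = f) (hlast : p.f (m - 1) = f') :
    (Finset.range m).filter
        (fun i => (ι (p.f i)).card = 1 ∧ Relation.EqvGen (FaceEquivStep ι I) (p.f i) f)
      = {0} := by
  ext i
  simp only [Finset.mem_filter, Finset.mem_range, Finset.mem_singleton]
  constructor
  · rintro ⟨hi, hb, hequiv⟩
    obtain rfl | rfl := p.eq_zero_or_eq_last_of_card_ι_eq_one hi hb
    · rfl
    · rw [hlast] at hequiv
      exact absurd hequiv.symm hne
  · rintro rfl
    rw [h0]
    exact ⟨p.one_le, hf, .refl f⟩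

/-- Second part of Lemma 4: if `f` and `f'` are inequivalent boundary faces, then along
any face path from `f` to `f'` there is exactly one index whose face is a boundary face
equivalent to `f`, namely the first one.  Hence the `Z`-type operator of the path
anticommutes with the `X`-type operator supported on the `≈`-class of `f`. -/
theorem face_path_odd_overlap_with_boundary_class
    {Faces Volumes Edges : Type*} [Fintype Faces] [Fintype Volumes] [Fintype Edges]
    [DecidableEq Faces] [DecidableEq Volumes]
    (ι : Faces → Finset Volumes) (I : Edges → Finset Faces)
    (hcard : ∀ f, 1 ≤ (ι f).card ∧ (ι f).card ≤ 2)
    (f f' : Faces) (hf : (ι f).card = 1) (hf' : (ι f').card = 1)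
    (hne : ¬ Relation.EqvGen (FaceEquivStep ι I) f f')
    (m : ℕ) (hm : 2 ≤ m) (p : FacePath ι m)
    (h0 : p.f 0 = f) (hlast : p.f (m - 1) = f') :
    (Finset.range m).filter
        (fun i => (ι (p.f i)).card = 1 ∧ Relation.EqvGen (FaceEquivStep ι I) (p.f i) f)
      = {0} :=
  face_path_odd_overlap_with_boundary_class_general ι I f f' hf hne m p h0 hlast
end

section
/- Lemma (stabilizer cut sets, Lemma 12 of the paper, also Lemma 10 for the augmented lattice): Assume every face is incident on exactly two volumes, i.e. (ι f).card = 2 for all f, and that the lattice is connected (any two distinct volumes are joined by a face path). For a set K of faces, K is a cut set if and only if there exists a set V of volumes with V nonempty and V ≠ the set of all volumes such that ∂(V) = {f | (ι f ∩ V).card = 1} ⊆ K. (In toric-code language: a collection of faces is a cut set if and only if it contains the support of a nontrivial X-type stabilizer.) -/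
/-- A face path from a volume `ν₀` to a volume `νm`. -/
def FacePath.FromTo {Faces Volumes : Type*} {ι : Faces → Finset Volumes} {m : ℕ}
    (p : FacePath ι m) (ν₀ νm : Volumes) : Prop :=
  ν₀ ∈ ι (p.f 0) ∧ νm ∈ ι (p.f (m - 1)) ∧ ν₀ ≠ νm ∧
    (∀ i, i + 1 < m → p.v i ≠ ν₀) ∧ (∀ i, i + 1 < m → p.v i ≠ νm)

/-- A set `K` of faces is a cut set if there are two distinct volumes such that every
face path between them contains a face of `K`. -/
def IsCutSet {Faces Volumes : Type*} (ι : Faces → Finset Volumes) (K : Set Faces) : Prop :=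
  ∃ ν ν' : Volumes, ν ≠ ν' ∧
    ∀ (m : ℕ) (p : FacePath ι m), p.FromTo ν ν' → ∃ i < m, p.f i ∈ K

/-- The lattice is connected: any two distinct volumes are joined by a face path. -/
def LatticeConnected {Faces Volumes : Type*} (ι : Faces → Finset Volumes) : Prop :=
  ∀ ν ν' : Volumes, ν ≠ ν' → ∃ (m : ℕ) (p : FacePath ι m), p.FromTo ν ν'


/-!
A face outside `K` lets one step between any two of its volumes, so `K` is a cut set exactly when
the graph of such steps is disconnected. A set `V` of volumes is closed under these steps exactly
when every face with one volume in `V` and one outside lies in `K`; since each face has two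
volumes, these are the faces with `(ι f ∩ V).card = 1`. A nonempty proper closed set exists
exactly when the graph is disconnected: take the component of a volume, or conversely note that
a walk leaving `V` must use a step out of it.
-/

open Finset SimpleGraph

theorem Finset.card_inter_eq_one_iff_of_card_eq_two {α : Type*} [DecidableEq α]
    {s t : Finset α} (hs : s.card = 2) :
    (s ∩ t).card = 1 ↔ (s ∩ t).Nonempty ∧ (s \ t).Nonempty := by
  have := card_inter_add_card_sdiff s t
  rw [← card_pos, ← card_pos]
  omega

theorem SimpleGraph.not_preconnected_iff_exists_adj_closed {V : Type*} [Fintype V]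
    (G : SimpleGraph V) :
    ¬ G.Preconnected ↔
      ∃ S : Finset V, S.Nonempty ∧ S ≠ univ ∧ ∀ a b, G.Adj a b → a ∈ S → b ∈ S := by
  classical
  constructor
  · intro h
    obtain ⟨u, v, huv⟩ : ∃ u v, ¬ G.Reachable u v := by
      simpa [Preconnected] using h
    refine ⟨univ.filter (G.Reachable u), ⟨u, by simp⟩, fun hS => huv ?_, ?_⟩
    · simpa using eq_univ_iff_forall.1 hS v
    · simp only [mem_filter, mem_univ, true_and]
      exact fun a b hab hua => hua.trans hab.reachable
  · rintro ⟨S, ⟨a, ha⟩, hS, hclosed⟩ hconn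
    obtain ⟨b, hb⟩ : ∃ b, b ∉ S := by simpa [eq_univ_iff_forall] using hS
    obtain ⟨q⟩ := hconn a b
    obtain ⟨d, -, hd, hd'⟩ := q.exists_boundary_dart S ha hb
    exact hd' (hclosed _ _ d.adj hd)

namespace FacePath

variable {Faces Volumes : Type*} {ι : Faces → Finset Volumes} {m : ℕ}

/-- `ν₀`, the inner volumes `p.v i`, then `νm`, shifted so that face `p.f i` is incident on
terms `i` and `i + 1`. -/
def vertexSeq (p : FacePath ι m) (ν₀ νm : Volumes) : ℕ → Volumes
  | 0 => ν₀
  | i + 1 => if i + 1 < m then p.v i else νm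

theorem vertexSeq_length (p : FacePath ι m) (ν₀ νm : Volumes) : p.vertexSeq ν₀ νm m = νm := by
  obtain ⟨k, rfl⟩ := Nat.exists_eq_add_of_le' p.one_le
  simp [vertexSeq]

theorem vertexSeq_mem {p : FacePath ι m} {ν₀ νm : Volumes} (hp : p.FromTo ν₀ νm) {i : ℕ}
    (hi : i < m) : p.vertexSeq ν₀ νm i ∈ ι (p.f i) ∧ p.vertexSeq ν₀ νm (i + 1) ∈ ι (p.f i) := by
  constructor
  · cases i with
    | zero => exact hp.1
    | succ j => simpa [vertexSeq, hi] using p.mem_right j hi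
  · by_cases h : i + 1 < m
    · simpa [vertexSeq, h] using p.mem_left i h
    · obtain rfl : i = m - 1 := by omega
      simpa [vertexSeq, h] using hp.2.1

end FacePath

section FaceGraph

variable {Faces Volumes : Type*} (ι : Faces → Finset Volumes) (K : Set Faces)

def faceGraph : SimpleGraph Volumes :=
  SimpleGraph.fromRel fun a b => ∃ f ∉ K, a ∈ ι f ∧ b ∈ ι f

variable {ι K}

theorem faceGraph_adj {a b : Volumes} :
    (faceGraph ι K).Adj a b ↔ a ≠ b ∧ ∃ f ∉ K, a ∈ ι f ∧ b ∈ ι f := by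
  simp only [faceGraph, fromRel_adj, and_congr_right_iff]
  exact fun _ => ⟨fun h => h.elim id fun ⟨f, hf, hb, ha⟩ => ⟨f, hf, ha, hb⟩, Or.inl⟩

theorem faceGraph_reachable {f : Faces} (hf : f ∉ K) {a b : Volumes} (ha : a ∈ ι f)
    (hb : b ∈ ι f) : (faceGraph ι K).Reachable a b := by
  by_cases hab : a = b
  · exact hab ▸ Reachable.refl a
  · exact (faceGraph_adj.2 ⟨hab, f, hf, ha, hb⟩).reachable

theorem FacePath.reachable_faceGraph {m : ℕ} {p : FacePath ι m} {ν ν' : Volumes}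
    (hp : p.FromTo ν ν') (hK : ∀ i < m, p.f i ∉ K) : (faceGraph ι K).Reachable ν ν' := by
  suffices ∀ n ≤ m, (faceGraph ι K).Reachable ν (p.vertexSeq ν ν' n) by
    simpa [p.vertexSeq_length] using this m le_rfl
  intro n hn
  induction n with
  | zero => rfl
  | succ n ih =>
    obtain ⟨hn₀, hn₁⟩ := p.vertexSeq_mem hp (i := n) (by omega)
    exact (ih (by omega)).trans (faceGraph_reachable (hK n (by omega)) hn₀ hn₁)

theorem exists_facePath_of_reachable {ν ν' : Volumes} (h : (faceGraph ι K).Reachable ν ν')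
    (hne : ν ≠ ν') : ∃ (m : ℕ) (p : FacePath ι m), p.FromTo ν ν' ∧ ∀ i < m, p.f i ∉ K := by
  obtain ⟨q, hq⟩ := h.exists_isPath
  have hlen : 1 ≤ q.length := Nat.one_le_iff_ne_zero.2 fun h0 => hne (q.eq_of_length_eq_zero h0)
  have hv : ∀ i j, i ≤ q.length → j ≤ q.length → i ≠ j → q.getVert i ≠ q.getVert j :=
    fun i j hi hj hij h => hij (hq.getVert_injOn hi hj h)
  have hface : ∀ i < q.length, ∃ f ∉ K, q.getVert i ∈ ι f ∧ q.getVert (i + 1) ∈ ι f :=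
    fun i hi => (faceGraph_adj.1 (q.adj_getVert_succ hi)).2
  have : Nonempty Faces := let ⟨f, _⟩ := hface 0 hlen; ⟨f⟩
  choose! F hFK hF₀ hF₁ using hface
  refine ⟨q.length, ⟨F, fun i => q.getVert (i + 1), hlen, fun i hi => hF₁ i (by omega),
      fun i hi => hF₀ (i + 1) hi, fun i j hi hj hij => hv _ _ hi.le hj.le (by omega)⟩,
    ⟨?_, ?_, hne, fun i hi => ?_, fun i hi => ?_⟩, hFK⟩
  · simpa using hF₀ 0 hlen
  · simpa [Nat.sub_add_cancel hlen] using hF₁ (q.length - 1) (by omega)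
  · simpa using hv (i + 1) 0 (by omega) (by omega) (by omega)
  · simpa using hv (i + 1) q.length (by omega) le_rfl (by omega)

theorem isCutSet_iff_not_preconnected : IsCutSet ι K ↔ ¬ (faceGraph ι K).Preconnected := by
  simp only [Preconnected, not_forall]
  constructor
  · rintro ⟨ν, ν', hne, hcut⟩
    refine ⟨ν, ν', fun h => ?_⟩
    obtain ⟨m, p, hp, hK⟩ := exists_facePath_of_reachable h hne
    obtain ⟨i, hi, hiK⟩ := hcut m p hp
    exact hK i hi hiK
  · rintro ⟨ν, ν', h⟩
    refine ⟨ν, ν', fun hne => h (hne ▸ Reachable.refl ν), fun m p hp => ?_⟩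
    by_contra! hK
    exact h (FacePath.reachable_faceGraph hp hK)

theorem faceGraph_adj_closed_iff [DecidableEq Volumes] (hcard : ∀ f, (ι f).card = 2)
    (V : Finset Volumes) :
    (∀ a b, (faceGraph ι K).Adj a b → a ∈ V → b ∈ V) ↔
      ∀ f, (ι f ∩ V).card = 1 → f ∈ K := by
  simp only [card_inter_eq_one_iff_of_card_eq_two (hcard _), faceGraph_adj]
  constructor
  · rintro hV f ⟨⟨a, ha⟩, ⟨b, hb⟩⟩
    rw [mem_inter] at ha
    rw [mem_sdiff] at hb
    by_contra hf
    exact hb.2 (hV a b ⟨fun h => hb.2 (h ▸ ha.2), f, hf, ha.1, hb.1⟩ ha.2)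
  · rintro hK a b ⟨-, f, hf, ha, hb⟩ haV
    by_contra hbV
    exact hf (hK f ⟨⟨a, mem_inter.2 ⟨ha, haV⟩⟩, ⟨b, mem_sdiff.2 ⟨hb, hbV⟩⟩⟩)

end FaceGraph

theorem isCutSet_iff_contains_stabilizer_support_general
    {Faces Volumes : Type*} [Fintype Volumes] [DecidableEq Volumes]
    (ι : Faces → Finset Volumes)
    (hcard : ∀ f, (ι f).card = 2)
    (K : Set Faces) :
    IsCutSet ι K ↔
      ∃ V : Finset Volumes, V.Nonempty ∧ V ≠ Finset.univ ∧
        ∀ f : Faces, ((ι f) ∩ V).card = 1 → f ∈ K := by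
  simp only [isCutSet_iff_not_preconnected, not_preconnected_iff_exists_adj_closed,
    faceGraph_adj_closed_iff hcard]

/-- Lemma 12 (stabilizer cut sets): if every face is incident on exactly two volumes and
the lattice is connected, then a set `K` of faces is a cut set if and only if it contains
the boundary `∂(V) = {f | (ι f ∩ V).card = 1}` of some nonempty proper set `V` of
volumes, i.e. the support of a nontrivial `X`-type stabilizer. -/
theorem isCutSet_iff_contains_stabilizer_support
    {Faces Volumes : Type*} [Fintype Faces] [Fintype Volumes] [DecidableEq Volumes]
    (ι : Faces → Finset Volumes)
    (hcard : ∀ f, (ι f).card = 2)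
    (hconn : LatticeConnected ι)
    (K : Set Faces) :
    IsCutSet ι K ↔
      ∃ V : Finset Volumes, V.Nonempty ∧ V ≠ Finset.univ ∧
        ∀ f : Faces, ((ι f) ∩ V).card = 1 → f ∈ K :=
  isCutSet_iff_contains_stabilizer_support_general ι hcard K
end

section
/- Lemma (stabilizers whose support is not a cut set lie on the boundary; first part of Lemma 5 of the paper): Assume 1 ≤ (ι f).card ≤ 2 for every face f and that the lattice is connected (any two distinct volumes are joined by a face path). Let V be a set of volumes and let ∂(V) = {f | (ι f ∩ V).card is odd} be the support of the X-type stabilizer ∏_{ν ∈ V} A_ν. If ∂(V) is not a cut set, then every face f ∈ ∂(V) satisfies (ι f).card = 1, i.e. the support of the stabilizer consists only of boundary faces. -/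
namespace Finset

variable {α : Type*} [DecidableEq α] {s V : Finset α}

theorem odd_card_inter_of_mem_of_notMem (hs : s.card ≤ 2) {x y : α} (hxs : x ∈ s) (hys : y ∈ s)
    (hxV : x ∈ V) (hyV : y ∉ V) : Odd (s ∩ V).card := by
  have hpos : 0 < (s ∩ V).card := card_pos.mpr ⟨x, mem_inter.mpr ⟨hxs, hxV⟩⟩
  have hlt : (s ∩ V).card < s.card :=
    card_lt_card ⟨inter_subset_left, fun h => hyV (mem_inter.mp (h hys)).2⟩
  rw [show (s ∩ V).card = 1 by omega]
  exact odd_one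

theorem exists_mem_and_notMem_of_odd_card_inter (hs : s.card ≤ 2) (hs₁ : s.card ≠ 1)
    (hodd : Odd (s ∩ V).card) : ∃ a ∈ s, a ∈ V ∧ ∃ b ∈ s, b ∉ V := by
  obtain ⟨a, ha⟩ := card_pos.mp hodd.pos
  refine ⟨a, (mem_inter.mp ha).1, (mem_inter.mp ha).2, ?_⟩
  have hne : (s ∩ V).card ≠ s.card := by
    have := card_le_card (inter_subset_left : s ∩ V ⊆ s)
    obtain ⟨k, hk⟩ := hodd
    omega
  by_contra! h
  exact hne (congrArg card (inter_eq_left.mpr h))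

end Finset

namespace FacePath

variable {Faces Volumes : Type*} {ι : Faces → Finset Volumes} {m : ℕ}

/-- The volumes `ν₀, v 0, …, v (m-2), νm` visited by a path from `ν₀` to `νm`, shifted by one
so that the face `f i` joins `vol ν₀ νm i` to `vol ν₀ νm (i + 1)`. -/
def vol (p : FacePath ι m) (ν₀ νm : Volumes) : ℕ → Volumes
  | 0 => ν₀
  | i + 1 => if i + 1 < m then p.v i else νm

variable {p : FacePath ι m} {ν₀ νm : Volumes}

theorem vol_mem (hp : p.FromTo ν₀ νm) {i : ℕ} (hi : i < m) : p.vol ν₀ νm i ∈ ι (p.f i) := by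
  cases i with
  | zero => exact hp.1
  | succ i =>
    rw [vol, if_pos hi]
    exact p.mem_right i hi

theorem vol_succ_mem (hp : p.FromTo ν₀ νm) {i : ℕ} (hi : i < m) :
    p.vol ν₀ νm (i + 1) ∈ ι (p.f i) := by
  rw [vol]
  split_ifs with h
  · exact p.mem_left i h
  · obtain rfl : i = m - 1 := by omega
    exact hp.2.1

theorem vol_length : p.vol ν₀ νm m = νm := by
  obtain ⟨k, rfl⟩ := Nat.exists_eq_add_of_le' p.one_le
  simp [vol]

theorem exists_odd_card_inter_of_fromTo [DecidableEq Volumes] (hcard : ∀ f, (ι f).card ≤ 2)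
    {V : Finset Volumes} (hp : p.FromTo ν₀ νm) (h₀ : ν₀ ∈ V) (hm : νm ∉ V) :
    ∃ i < m, Odd ((ι (p.f i) ∩ V).card) := by
  by_contra! heven
  have hinV : ∀ i ≤ m, p.vol ν₀ νm i ∈ V := by
    intro i hi
    induction i with
    | zero => exact h₀
    | succ i ih =>
      by_contra hout
      exact heven i (by omega) <|
        Finset.odd_card_inter_of_mem_of_notMem (hcard _) (vol_mem hp (by omega))
          (vol_succ_mem hp (by omega)) (ih (by omega)) hout
  have hlast := hinV m le_rfl
  rw [vol_length] at hlast
  exact hm hlast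

end FacePath

theorem isCutSet_odd_card_inter {Faces Volumes : Type*} [DecidableEq Volumes]
    {ι : Faces → Finset Volumes} (hcard : ∀ f, (ι f).card ≤ 2) {V : Finset Volumes}
    {a b : Volumes} (ha : a ∈ V) (hb : b ∉ V) :
    IsCutSet ι {f : Faces | Odd ((ι f ∩ V).card)} :=
  ⟨a, b, fun h => hb (h ▸ ha),
    fun _ _ hp => FacePath.exists_odd_card_inter_of_fromTo hcard hp ha hb⟩

theorem stabilizer_support_not_cutset_subset_boundary_general
    {Faces Volumes : Type*} [DecidableEq Volumes]
    (ι : Faces → Finset Volumes)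
    (hcard : ∀ f, 1 ≤ (ι f).card ∧ (ι f).card ≤ 2)
    (V : Finset Volumes)
    (hnotcut : ¬ IsCutSet ι {f : Faces | Odd ((ι f ∩ V).card)}) :
    ∀ f : Faces, Odd ((ι f ∩ V).card) → (ι f).card = 1 := by
  intro f hf
  by_contra hne
  obtain ⟨a, -, ha, b, -, hb⟩ :=
    Finset.exists_mem_and_notMem_of_odd_card_inter (hcard f).2 hne hf
  exact hnotcut (isCutSet_odd_card_inter (fun f => (hcard f).2) ha hb)

/-- First part of Lemma 5: if the support `∂(V) = {f | (ι f ∩ V).card odd}` of the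
`X`-type stabilizer `∏_{ν ∈ V} A_ν` is not a cut set, then it consists only of boundary
faces, i.e. faces incident on exactly one volume. -/
theorem stabilizer_support_not_cutset_subset_boundary
    {Faces Volumes : Type*} [Fintype Faces] [Fintype Volumes] [DecidableEq Volumes]
    (ι : Faces → Finset Volumes)
    (hcard : ∀ f, 1 ≤ (ι f).card ∧ (ι f).card ≤ 2)
    (hconn : LatticeConnected ι)
    (V : Finset Volumes)
    (hnotcut : ¬ IsCutSet ι {f : Faces | Odd ((ι f ∩ V).card)}) :
    ∀ f : Faces, Odd ((ι f ∩ V).card) → (ι f).card = 1 :=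
  stabilizer_support_not_cutset_subset_boundary_general ι hcard V hnotcut
end

section
/- Lemma (logical operators whose support is not a cut set lie on the boundary; second part of Lemma 5 of the paper): Assume 1 ≤ (ι f).card ≤ 2 for every face f and that the lattice is connected. Assume further (no interior boundaries, condition L1): for every face f with ι f = {ν, ν′} of cardinality 2 and every face path ρ from ν to ν′, the vector χ(ρ) + 1_{{f}} lies in the Z-stabilizer subspace. Let M be a set of faces such that (M ∩ I e).card is even for every edge e (i.e. the X-type operator X_M commutes with every Z-stabilizer B_e, so it is a stabilizer or a logical operator). If M is not a cut set, then every face f ∈ M satisfies (ι f).card = 1. -/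
/-! A face `f` of `M` incident on two volumes `ν, ν'` yields, since `M` is not a cut set, a face
path `ρ` from `ν` to `ν'` avoiding `M`. Pair vectors with `M` via `x ↦ ∑_{g ∈ M} x g`: the
commutation condition makes this pairing vanish on the `Z`-stabilizer subspace, so by L1 it
vanishes on `χ(ρ) + 1_{f}`. But it is `0` on `χ(ρ)` and `1` on `1_{f}`. -/

section Parity

variable {α : Type*}

def parityOn (M : Finset α) : (α → ZMod 2) →ₗ[ZMod 2] ZMod 2 :=
  ∑ g ∈ M, LinearMap.proj g

theorem parityOn_apply (M : Finset α) (x : α → ZMod 2) : parityOn M x = ∑ g ∈ M, x g := by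
  simp [parityOn]

variable [DecidableEq α]

theorem parityOn_ind (M A : Finset α) : parityOn M (ind A) = ((M ∩ A).card : ZMod 2) := by
  simp [parityOn_apply, ind, Finset.sum_ite_mem]

theorem parityOn_ind_singleton {M : Finset α} {a : α} (ha : a ∈ M) :
    parityOn M (ind {a}) = 1 := by
  simp [parityOn_ind, Finset.inter_singleton_of_mem ha]

theorem parityOn_chi_eq_zero {M : Finset α} {f : ℕ → α} {m : ℕ} (hf : ∀ i < m, f i ∉ M) :
    parityOn M (chi f m) = 0 := by
  rw [parityOn_apply]
  refine Finset.sum_eq_zero fun g hg => ?_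
  rw [chi, Finset.filter_false_of_mem fun i hi (hig : f i = g) =>
    hf i (Finset.mem_range.mp hi) (hig ▸ hg)]
  simp

theorem zStab_le_ker_parityOn {Edges : Type*} {I : Edges → Finset α} {M : Finset α}
    (hcomm : ∀ e, Even (M ∩ I e).card) : ZStab I ≤ LinearMap.ker (parityOn M) := by
  refine Submodule.span_le.mpr ?_
  rintro _ ⟨e, rfl⟩
  simpa [parityOn_ind] using (hcomm e).natCast_zmod_two

end Parity

theorem exists_facePath_avoiding_of_not_isCutSet {Faces Volumes : Type*}
    {ι : Faces → Finset Volumes} {K : Set Faces} (hK : ¬ IsCutSet ι K) {ν ν' : Volumes}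
    (hν : ν ≠ ν') : ∃ (m : ℕ) (p : FacePath ι m), p.FromTo ν ν' ∧ ∀ i < m, p.f i ∉ K := by
  simp only [IsCutSet, not_exists, not_and, not_forall] at hK
  obtain ⟨m, p, hp, hK⟩ := hK ν ν' hν
  exact ⟨m, p, hp, fun i hi hiK => hK i hi hiK⟩

theorem operator_support_not_cutset_subset_boundary_general
    {Faces Volumes Edges : Type*}
    [DecidableEq Faces] [DecidableEq Volumes]
    (ι : Faces → Finset Volumes) (I : Edges → Finset Faces)
    (hcard : ∀ f, 1 ≤ (ι f).card ∧ (ι f).card ≤ 2)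
    (hL1 : ∀ (f : Faces) (ν ν' : Volumes), ν ≠ ν' → ι f = {ν, ν'} →
      ∀ (m : ℕ) (p : FacePath ι m), p.FromTo ν ν' →
        chi p.f m + ind ({f} : Finset Faces) ∈ ZStab I)
    (M : Finset Faces)
    (hcomm : ∀ e : Edges, Even ((M ∩ I e).card))
    (hnotcut : ¬ IsCutSet ι (↑M : Set Faces)) :
    ∀ f ∈ M, (ι f).card = 1 := by
  intro f hf
  by_contra hne
  have hcard2 : (ι f).card = 2 := by have := hcard f; omega
  obtain ⟨ν, ν', hν, hιf⟩ := Finset.card_eq_two.mp hcard2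
  obtain ⟨m, p, hp, havoid⟩ := exists_facePath_avoiding_of_not_isCutSet hnotcut hν
  have hker := zStab_le_ker_parityOn hcomm (hL1 f ν ν' hν hιf m p hp)
  rw [LinearMap.mem_ker, map_add, parityOn_chi_eq_zero havoid, parityOn_ind_singleton hf] at hker
  simp at hker

/-- Second part of Lemma 5: assume the lattice is connected and has no interior
boundaries (condition L1: for every face `f` incident on two volumes `ν, ν'` and every
face path `ρ` from `ν` to `ν'`, the vector `χ(ρ) + 1_{{f}}` is in the `Z`-stabilizer
subspace).  If `M` is the support of an `X`-type operator commuting with every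
`Z`-stabilizer (i.e. `(M ∩ I e).card` is even for every edge `e`) and `M` is not a cut
set, then every face of `M` is a boundary face. -/
theorem operator_support_not_cutset_subset_boundary
    {Faces Volumes Edges : Type*} [Fintype Faces] [Fintype Volumes] [Fintype Edges]
    [DecidableEq Faces] [DecidableEq Volumes]
    (ι : Faces → Finset Volumes) (I : Edges → Finset Faces)
    (hcard : ∀ f, 1 ≤ (ι f).card ∧ (ι f).card ≤ 2)
    (hconn : LatticeConnected ι)
    (hL1 : ∀ (f : Faces) (ν ν' : Volumes), ν ≠ ν' → ι f = {ν, ν'} →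
      ∀ (m : ℕ) (p : FacePath ι m), p.FromTo ν ν' →
        chi p.f m + ind ({f} : Finset Faces) ∈ ZStab I)
    (M : Finset Faces)
    (hcomm : ∀ e : Edges, Even ((M ∩ I e).card))
    (hnotcut : ¬ IsCutSet ι (↑M : Set Faces)) :
    ∀ f ∈ M, (ι f).card = 1 :=
  operator_support_not_cutset_subset_boundary_general ι I hcard hL1 M hcomm hnotcut
end

section
/- Theorem (unique solution within the explored set, Theorem 9 of the paper, with the properties of the explored set from Lemma 8 as hypotheses): Let F and E be finite types and σ : (F → ZMod 2) →ₗ[ZMod 2] (E → ZMod 2) a linear map. Let 𝓔 ⊆ F be a set such that: (i) no nonzero x ∈ ker σ has supp x ⊆ 𝓔 (𝓔 supports no stabilizer or logical operator), and (ii) for every f ∉ 𝓔 there exists v ∈ ker σ with supp v ⊆ 𝓔 ∪ {f} and v f = 1 (adding any further face creates a stabilizer or logical operator through it). Then for every x₀ : F → ZMod 2 there exists a unique x : F → ZMod 2 with supp x ⊆ 𝓔 and σ x = σ x₀. -/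
/-!
The functions supported in `𝓔` form a complement of `ker σ`. Hypothesis (i) says exactly that
they meet `ker σ` only in `0`, which gives uniqueness. For existence, every basis vector
`Pi.single f 1` lies in `ker σ ⊔ {x | supp x ⊆ 𝓔}`: for `f ∈ 𝓔` trivially, and for `f ∉ 𝓔` it
differs from the kernel element `v` of (ii) by `v - Pi.single f 1`, which is supported in `𝓔`
because `v f = 1`.
-/

open Function Submodule

section SupportedIn

variable {F R : Type*}

def supportedIn (R : Type*) [Semiring R] (s : Set F) : Submodule R (F → R) :=
  Submodule.pi sᶜ fun _ => ⊥

variable [Ring R] {s : Set F} {K : Submodule R (F → R)}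

@[simp]
theorem mem_supportedIn {x : F → R} : x ∈ supportedIn R s ↔ support x ⊆ s := by
  simp only [supportedIn, mem_pi, Set.mem_compl_iff, mem_bot]
  exact ⟨fun h f hf => by_contra fun hfs => hf (h f hfs),
    fun h f hfs => by_contra fun hf => hfs (h hf)⟩

theorem disjoint_supportedIn_iff :
    Disjoint (supportedIn R s) K ↔ ∀ x ∈ K, x ≠ 0 → ¬ support x ⊆ s := by
  rw [disjoint_comm, disjoint_def]
  simp only [mem_supportedIn]
  exact ⟨fun h x hK hx hs => hx (h x hK hs), fun h x hK hs => by_contra fun hx => h x hK hx hs⟩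

theorem single_mem_sup_supportedIn [DecidableEq F] {f : F} {v : F → R} (hv : v ∈ K)
    (hsupp : support v ⊆ s ∪ {f}) (hvf : v f = 1) : Pi.single f 1 ∈ K ⊔ supportedIn R s := by
  have hrest : v - Pi.single f 1 ∈ supportedIn R s := by
    rw [mem_supportedIn]
    intro g hg
    by_contra hgs
    obtain rfl | hgf := eq_or_ne g f
    · simp [hvf] at hg
    · have hvg : v g = 0 := notMem_support.mp fun h => (hsupp h).elim hgs hgf
      simp [hvg, hgf] at hg
  simpa using sub_mem (mem_sup_left hv) (mem_sup_right hrest)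

theorem sup_supportedIn_eq_top [Fintype F]
    (h : ∀ f ∉ s, ∃ v ∈ K, support v ⊆ s ∪ {f} ∧ v f = 1) : K ⊔ supportedIn R s = ⊤ := by
  classical
  rw [eq_top_iff, ← (Pi.basisFun R F).span_eq, span_le, Set.range_subset_iff]
  intro f
  rw [Pi.basisFun_apply]
  by_cases hf : f ∈ s
  · exact mem_sup_right (mem_supportedIn.mpr (Pi.support_single_subset.trans (by simpa)))
  · obtain ⟨v, hv, hsupp, hvf⟩ := h f hf
    exact single_mem_sup_supportedIn hv hsupp hvf

end SupportedIn

theorem unique_error_in_explored_set_general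
    {F E : Type*} [Fintype F]
    (σ : (F → ZMod 2) →ₗ[ZMod 2] (E → ZMod 2)) (𝓔 : Set F)
    (h1 : ∀ x ∈ LinearMap.ker σ, x ≠ 0 → ¬ Function.support x ⊆ 𝓔)
    (h2 : ∀ f ∉ 𝓔, ∃ v ∈ LinearMap.ker σ,
      Function.support v ⊆ 𝓔 ∪ {f} ∧ v f = 1) :
    ∀ x₀ : F → ZMod 2, ∃! x : F → ZMod 2,
      Function.support x ⊆ 𝓔 ∧ σ x = σ x₀ := by
  intro x₀
  have hx₀ : x₀ ∈ LinearMap.ker σ ⊔ supportedIn (ZMod 2) 𝓔 := by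
    rw [sup_supportedIn_eq_top h2]
    exact mem_top
  obtain ⟨k, hk, x, hx, rfl⟩ := mem_sup.mp hx₀
  have hinj := LinearMap.disjoint_ker_iff_injOn.mp (disjoint_supportedIn_iff.mpr h1)
  refine ⟨x, ⟨mem_supportedIn.mp hx, by simp [LinearMap.mem_ker.mp hk]⟩, ?_⟩
  rintro y ⟨hy, hσy⟩
  exact hinj (mem_supportedIn.mpr hy) hx (by simpa [LinearMap.mem_ker.mp hk] using hσy)

/-- Theorem 9 (unique solution within the explored set): let `σ` be the syndrome map of
the 3D toric code for bit-flip errors.  If the explored set `𝓔` supports no nonzero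
element of `ker σ` (no stabilizer or logical operator), and adding any further face `f`
creates an element of `ker σ` supported in `𝓔 ∪ {f}` and passing through `f`, then for
every error `x₀` there is a unique `x` supported in `𝓔` with the same syndrome. -/
theorem unique_error_in_explored_set
    {F E : Type*} [Fintype F] [Fintype E]
    (σ : (F → ZMod 2) →ₗ[ZMod 2] (E → ZMod 2)) (𝓔 : Set F)
    (h1 : ∀ x ∈ LinearMap.ker σ, x ≠ 0 → ¬ Function.support x ⊆ 𝓔)
    (h2 : ∀ f ∉ 𝓔, ∃ v ∈ LinearMap.ker σ,
      Function.support v ⊆ 𝓔 ∪ {f} ∧ v f = 1) :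
    ∀ x₀ : F → ZMod 2, ∃! x : F → ZMod 2,
      Function.support x ⊆ 𝓔 ∧ σ x = σ x₀ :=
  unique_error_in_explored_set_general σ 𝓔 h1 h2
end

section
/- Lemma (existence of an artificial boundary, Lemma 13 of the paper, abstract form): Let F be a finite type and let S ≤ K be subspaces of the ℤ/2-vector space F → ZMod 2 (S the space of X-stabilizer supports, K the space of supports of X-type operators commuting with every Z-check). Then there exists a set X ⊆ F such that: (i) for every k ∈ K there exists k′ ∈ K with k − k′ ∈ S and supp k′ ⊆ X (every logical class has a representative supported in X), and (ii) no nonzero s ∈ S satisfies supp s ⊆ X (X does not contain the support of a nontrivial stabilizer). -/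
/-!
Take `X` minimal among the sets on which every class of `K` modulo `S` has a representative
(`Set.univ` is one, and `Set F` is finite). If some `s ∈ S` had `f ∈ supp s ⊆ X`, then
subtracting the right multiple of `s` from each representative kills its value at `f` without
leaving `X` or the class, so `X \ {f}` would also do, contradicting minimality.
-/

open Function

section

variable {𝕜 F : Type*} [DivisionRing 𝕜]

def HasRepresentativesIn (S K : Submodule 𝕜 (F → 𝕜)) (X : Set F) : Prop :=
  ∀ k ∈ K, ∃ k' ∈ K, k - k' ∈ S ∧ support k' ⊆ X

theorem HasRepresentativesIn.sdiff_singleton {S K : Submodule 𝕜 (F → 𝕜)} {X : Set F}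
    (hX : HasRepresentativesIn S K X) (hSK : S ≤ K) {s : F → 𝕜} (hs : s ∈ S)
    (hsX : support s ⊆ X) {f : F} (hf : s f ≠ 0) :
    HasRepresentativesIn S K (X \ {f}) := by
  intro k hk
  obtain ⟨k', hk', hkk', hk'X⟩ := hX k hk
  set c := k' f * (s f)⁻¹
  refine ⟨k' - c • s, sub_mem hk' (K.smul_mem c (hSK hs)), ?_, ?_⟩
  · have hsplit : k - (k' - c • s) = (k - k') + c • s := by abel
    rw [hsplit]
    exact add_mem hkk' (S.smul_mem c hs)
  · intro x hx
    refine ⟨?_, ?_⟩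
    · exact Set.union_subset hk'X ((support_const_smul_subset c s).trans hsX)
        (support_sub _ _ hx)
    · rintro rfl
      apply hx
      simp [c, inv_mul_cancel_right₀ hf]

theorem exists_minimal_hasRepresentativesIn [Finite F] (S K : Submodule 𝕜 (F → 𝕜)) :
    ∃ X : Set F, Minimal (HasRepresentativesIn S K) X :=
  exists_minimal_of_wellFoundedLT _
    ⟨Set.univ, fun k hk => ⟨k, hk, by simp, Set.subset_univ _⟩⟩

end

/-- Lemma 13 (existence of an artificial boundary), abstract form: given subspaces
`S ≤ K` of `F → ZMod 2` (`S` the space of `X`-stabilizer supports, `K` the space of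
supports of `X`-type operators commuting with every `Z`-check), there is a set `X` of
faces such that every class of `K` modulo `S` has a representative supported in `X`,
while `X` does not contain the support of any nonzero element of `S`. -/
theorem artificial_boundary_exists
    {F : Type*} [Fintype F]
    (S K : Submodule (ZMod 2) (F → ZMod 2)) (hSK : S ≤ K) :
    ∃ X : Set F,
      (∀ k ∈ K, ∃ k' ∈ K, k - k' ∈ S ∧ Function.support k' ⊆ X) ∧
      (∀ s ∈ S, s ≠ 0 → ¬ Function.support s ⊆ X) := by
  obtain ⟨X, hX, hXmin⟩ := exists_minimal_hasRepresentativesIn S K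
  refine ⟨X, hX, fun s hs hs0 hsX => ?_⟩
  obtain ⟨f, hf⟩ := Function.ne_iff.mp hs0
  exact (Set.sdiff_singleton_ssubset.mpr (hsX hf)).not_subset
    (hXmin (hX.sdiff_singleton hSK hs hsX hf) Set.sdiff_subset)
end

section
/- Lemma (detecting logical operators outside the artificial boundary, Lemma 14 of the paper, abstract form): Let F be a finite type and S ≤ K subspaces of F → ZMod 2. Let X ⊆ F satisfy: for every k ∈ K there exists k′ ∈ K with k − k′ ∈ S and supp k′ ⊆ X. Let 𝓔 ⊆ F with 𝓔 ∩ X = ∅, and suppose v ∈ K with v ∉ S and supp v ⊆ 𝓔 (a logical operator supported in 𝓔). Then there exists a nonzero s ∈ S with supp s ⊆ 𝓔 ∪ X (so 𝓔 ∪ X contains the support of a nontrivial stabilizer, hence is a cut set). -/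
theorem Function.eq_zero_of_support_subset_of_disjoint {α M : Type*} [Zero M] {f : α → M}
    {A B : Set α} (hA : Function.support f ⊆ A) (hB : Function.support f ⊆ B)
    (hAB : Disjoint A B) : f = 0 :=
  Function.support_eq_empty_iff.mp (Set.subset_empty_iff.mp (hAB hA hB))

theorem logical_in_explored_set_gives_stabilizer_general
    {F : Type*}
    (S K : Submodule (ZMod 2) (F → ZMod 2))
    (X : Set F)
    (hX : ∀ k ∈ K, ∃ k' ∈ K, k - k' ∈ S ∧ Function.support k' ⊆ X)
    (𝓔 : Set F) (hdisj : 𝓔 ∩ X = ∅)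
    (v : F → ZMod 2) (hvK : v ∈ K) (hvS : v ∉ S)
    (hsupp : Function.support v ⊆ 𝓔) :
    ∃ s ∈ S, s ≠ 0 ∧ Function.support s ⊆ 𝓔 ∪ X := by
  obtain ⟨k', -, hdiffS, hk'X⟩ := hX v hvK
  refine ⟨v - k', hdiffS, ?_,
    (Function.support_sub v k').trans (Set.union_subset_union hsupp hk'X)⟩
  intro hdiff
  obtain rfl : v = k' := sub_eq_zero.mp hdiff
  have hv0 : v = 0 := Function.eq_zero_of_support_subset_of_disjoint hsupp hk'X
    (Set.disjoint_iff_inter_eq_empty.mpr hdisj)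
  exact hvS (hv0 ▸ S.zero_mem)

/-- Lemma 14 (detecting logical operators outside the artificial boundary), abstract
form: let `S ≤ K` be subspaces of `F → ZMod 2` (`S` the `X`-stabilizer supports, `K` the
supports of `X`-type operators commuting with every `Z`-check), and let `X` be a set of
faces in which every class of `K` modulo `S` has a representative.  If `𝓔` is disjoint
from `X` and supports a logical operator `v ∈ K \ S`, then `𝓔 ∪ X` contains the support
of a nonzero stabilizer `s ∈ S` (hence is a cut set). -/
theorem logical_in_explored_set_gives_stabilizer
    {F : Type*} [Fintype F]
    (S K : Submodule (ZMod 2) (F → ZMod 2)) (hSK : S ≤ K)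
    (X : Set F)
    (hX : ∀ k ∈ K, ∃ k' ∈ K, k - k' ∈ S ∧ Function.support k' ⊆ X)
    (𝓔 : Set F) (hdisj : 𝓔 ∩ X = ∅)
    (v : F → ZMod 2) (hvK : v ∈ K) (hvS : v ∉ S)
    (hsupp : Function.support v ⊆ 𝓔) :
    ∃ s ∈ S, s ≠ 0 ∧ Function.support s ⊆ 𝓔 ∪ X :=
  logical_in_explored_set_gives_stabilizer_general S K X hX 𝓔 hdisj v hvK hvS hsupp
end

section
/- Theorem (projection of the error onto the artificial boundary, Theorem 16 of the paper, with the properties from Lemma 15 as hypotheses): Let F and E be finite types and σ : (F → ZMod 2) →ₗ[ZMod 2] (E → ZMod 2) a linear map. Let X, 𝓔 ⊆ F be disjoint sets such that: (i) every nonzero v ∈ ker σ with supp v ⊆ 𝓔 ∪ X satisfies supp v ⊆ X, and (ii) for every f ∉ 𝓔 ∪ X there exists v ∈ ker σ with supp v ⊆ 𝓔 ∪ X ∪ {f} and v f = 1. Then: (a) Existence: for every x₀ : F → ZMod 2 there exists x with supp x ⊆ 𝓔 ∪ X and σ x = σ x₀; (b) Uniqueness up to X: if x₁, x₂ both have support contained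 in 𝓔 ∪ X and σ x₁ = σ x₂, then x₁ f = x₂ f for every f ∉ X (equivalently supp(x₁ − x₂) ⊆ X). -/
/-! For each face `f` outside `S = 𝓔 ∪ X`, hypothesis (ii) supplies a kernel element `v f` which,
outside `S`, is the indicator of `f`. Subtracting `∑ f ∉ S, x₀ f • v f` from `x₀` therefore kills
`x₀` outside `S` without changing its syndrome. Two representatives supported in `S` with the same
syndrome differ by a kernel element supported in `S`, which by (i) vanishes outside `X`. -/

section

variable {F R M : Type*} [Ring R] [AddCommGroup M] [Module R M] (σ : (F → R) →ₗ[R] M)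

theorem exists_support_subset_map_eq [Fintype F] {S : Set F}
    (hS : ∀ f ∉ S, ∃ v ∈ LinearMap.ker σ, Function.support v ⊆ S ∪ {f} ∧ v f = 1)
    (x₀ : F → R) : ∃ x : F → R, Function.support x ⊆ S ∧ σ x = σ x₀ := by
  classical
  -- Taking `0` for `f ∈ S` makes the family non-dependent, so that `choose` applies.
  have hS_total : ∀ f, ∃ v ∈ LinearMap.ker σ, f ∉ S → Function.support v ⊆ S ∪ {f} ∧ v f = 1 := by
    intro f
    by_cases hf : f ∈ S
    · exact ⟨0, Submodule.zero_mem _, fun h => absurd hf h⟩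
    · obtain ⟨v, hv, hvS⟩ := hS f hf
      exact ⟨v, hv, fun _ => hvS⟩
  choose v hv_ker hv using hS_total
  let T := Finset.univ.filter (· ∉ S)
  have hsum_apply : ∀ f ∉ S, (∑ g ∈ T, x₀ g • v g) f = x₀ f := by
    intro f hf
    rw [Finset.sum_apply, Finset.sum_eq_single_of_mem f (by simpa [T] using hf)]
    · simp [(hv f hf).2]
    · intro g hg hgf
      have hvg : v g f = 0 := Function.notMem_support.mp fun h =>
        ((hv g (by simpa [T] using hg)).1 h).elim hf (fun hfg => hgf hfg.symm)
      simp [hvg]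
  refine ⟨x₀ - ∑ g ∈ T, x₀ g • v g, fun f hf => ?_, ?_⟩
  · by_contra hfS
    exact hf (by simp [hsum_apply f hfS])
  · simp [map_sum, LinearMap.mem_ker.mp (hv_ker _)]

theorem apply_eq_of_support_subset_of_map_eq {S X : Set F}
    (hX : ∀ v ∈ LinearMap.ker σ, v ≠ 0 → Function.support v ⊆ S → Function.support v ⊆ X)
    {x₁ x₂ : F → R} (h₁ : Function.support x₁ ⊆ S) (h₂ : Function.support x₂ ⊆ S)
    (hσ : σ x₁ = σ x₂) {f : F} (hf : f ∉ X) : x₁ f = x₂ f := by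
  by_contra hne
  have hker : x₁ - x₂ ∈ LinearMap.ker σ := by simp [hσ]
  have hsupp : Function.support (x₁ - x₂) ⊆ S :=
    (Function.support_sub x₁ x₂).trans (Set.union_subset h₁ h₂)
  have hf_supp : f ∈ Function.support (x₁ - x₂) := by simpa [sub_eq_zero] using hne
  exact hf (hX _ hker (fun h => by simp [h] at hf_supp) hsupp hf_supp)

end

theorem error_projection_onto_boundary_general
    {F E : Type*} [Fintype F]
    (σ : (F → ZMod 2) →ₗ[ZMod 2] (E → ZMod 2)) (X 𝓔 : Set F)
    (h1 : ∀ v ∈ LinearMap.ker σ, v ≠ 0 →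
      Function.support v ⊆ 𝓔 ∪ X → Function.support v ⊆ X)
    (h2 : ∀ f ∉ 𝓔 ∪ X, ∃ v ∈ LinearMap.ker σ,
      Function.support v ⊆ 𝓔 ∪ X ∪ {f} ∧ v f = 1) :
    (∀ x₀ : F → ZMod 2, ∃ x : F → ZMod 2,
        Function.support x ⊆ 𝓔 ∪ X ∧ σ x = σ x₀) ∧
    (∀ x₁ x₂ : F → ZMod 2, Function.support x₁ ⊆ 𝓔 ∪ X →
        Function.support x₂ ⊆ 𝓔 ∪ X → σ x₁ = σ x₂ →
        ∀ f ∉ X, x₁ f = x₂ f) :=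
  ⟨exists_support_subset_map_eq σ h2,
    fun _ _ hx₁ hx₂ hσ _ hf => apply_eq_of_support_subset_of_map_eq σ h1 hx₁ hx₂ hσ hf⟩

/-- Theorem 16 (projection of the error onto the artificial boundary): let `σ` be the
syndrome map of the 3D toric code for bit-flip errors, `X` an artificial boundary and
`𝓔` the explored set, with `𝓔 ∩ X = ∅`.  Assume every nonzero element of `ker σ`
supported in `𝓔 ∪ X` is in fact supported in `X`, and adding any further face `f`
creates an element of `ker σ` supported in `𝓔 ∪ X ∪ {f}` passing through `f`.  Then
every error has an equivalent representative supported in `𝓔 ∪ X`, and any two such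
representatives agree outside `X`. -/
theorem error_projection_onto_boundary
    {F E : Type*} [Fintype F] [Fintype E]
    (σ : (F → ZMod 2) →ₗ[ZMod 2] (E → ZMod 2)) (X 𝓔 : Set F)
    (hdisj : 𝓔 ∩ X = ∅)
    (h1 : ∀ v ∈ LinearMap.ker σ, v ≠ 0 →
      Function.support v ⊆ 𝓔 ∪ X → Function.support v ⊆ X)
    (h2 : ∀ f ∉ 𝓔 ∪ X, ∃ v ∈ LinearMap.ker σ,
      Function.support v ⊆ 𝓔 ∪ X ∪ {f} ∧ v f = 1) :
    (∀ x₀ : F → ZMod 2, ∃ x : F → ZMod 2,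
        Function.support x ⊆ 𝓔 ∪ X ∧ σ x = σ x₀) ∧
    (∀ x₁ x₂ : F → ZMod 2, Function.support x₁ ⊆ 𝓔 ∪ X →
        Function.support x₂ ⊆ 𝓔 ∪ X → σ x₁ = σ x₂ →
        ∀ f ∉ X, x₁ f = x₂ f) :=
  error_projection_onto_boundary_general σ X 𝓔 h1 h2
end

section
/- Remark (evenness of volume incidence along a face path between volumes; Remark 4 of the paper): Let (f₁, …, f_m; ν₁, …, ν_{m−1}) be a face path from a volume ν₀ to a volume ν_m (so ν₀ ∈ ι f₁, ν_m ∈ ι f_m, ν₀ ≠ ν_m, and ν₀, ν_m ∉ {ν₁, …, ν_{m−1}}). Then for every volume ν with ν ≠ ν₀ and ν ≠ ν_m, the number of indices i ∈ {1, …, m} with ν ∈ ι f_i is even. -/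
namespace FacePath

variable {Faces Volumes : Type*} {ι : Faces → Finset Volumes} {m : ℕ}

def volumeWalk (p : FacePath ι m) (ν₀ νm : Volumes) (i : ℕ) : Volumes :=
  if i = 0 then ν₀ else if i < m then p.v (i - 1) else νm

variable (p : FacePath ι m) {ν₀ νm : Volumes}

theorem volumeWalk_zero : p.volumeWalk ν₀ νm 0 = ν₀ := if_pos rfl

theorem volumeWalk_succ {i : ℕ} (hi : i + 1 < m) : p.volumeWalk ν₀ νm (i + 1) = p.v i := by
  simp [volumeWalk, hi]

theorem volumeWalk_length : p.volumeWalk ν₀ νm m = νm := by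
  have := p.one_le
  simp [volumeWalk, show m ≠ 0 by omega]

theorem volumeWalk_mem_left (hft : p.FromTo ν₀ νm) {i : ℕ} (hi : i < m) :
    p.volumeWalk ν₀ νm i ∈ ι (p.f i) := by
  cases i with
  | zero => exact hft.1
  | succ j => exact p.volumeWalk_succ hi ▸ p.mem_right j hi

theorem volumeWalk_mem_right (hft : p.FromTo ν₀ νm) {i : ℕ} (hi : i < m) :
    p.volumeWalk ν₀ νm (i + 1) ∈ ι (p.f i) := by
  by_cases h : i + 1 < m
  · exact p.volumeWalk_succ h ▸ p.mem_left i h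
  · obtain rfl : m = i + 1 := by omega
    exact p.volumeWalk_length ▸ hft.2.1

theorem volumeWalk_ne_succ (hft : p.FromTo ν₀ νm) {i : ℕ} (hi : i < m) :
    p.volumeWalk ν₀ νm i ≠ p.volumeWalk ν₀ νm (i + 1) := by
  obtain ⟨-, -, hne, hv₀, hvm⟩ := hft
  by_cases h : i + 1 < m
  · rw [p.volumeWalk_succ h]
    cases i with
    | zero => exact (hv₀ 0 h).symm
    | succ j => exact p.volumeWalk_succ hi ▸ p.distinct j (j + 1) hi h (by omega)
  · obtain rfl : m = i + 1 := by omega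
    rw [p.volumeWalk_length]
    cases i with
    | zero => exact hne
    | succ j => exact p.volumeWalk_succ hi ▸ hvm j hi

end FacePath

theorem Finset.eq_pair_of_card_le_two {α : Type*} [DecidableEq α] {s : Finset α}
    (hs : s.card ≤ 2) {a b : α} (ha : a ∈ s) (hb : b ∈ s) (hab : a ≠ b) : s = {a, b} :=
  (Finset.eq_of_subset_of_card_le (Finset.insert_subset ha (Finset.singleton_subset_iff.2 hb))
    (by rw [Finset.card_pair hab]; exact hs)).symm

theorem card_filter_range_step_eq_two_mul {α : Type*} [DecidableEq α] (w : ℕ → α) (m : ℕ)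
    (hstep : ∀ i < m, w i ≠ w (i + 1)) {x : α} (h₀ : x ≠ w 0) (hm : x ≠ w m) :
    ((Finset.range m).filter (fun i => x = w i ∨ x = w (i + 1))).card =
      2 * ((Finset.range (m + 1)).filter (fun i => x = w i)).card := by
  have hsplit : ∀ i ∈ Finset.range m,
      (if x = w i ∨ x = w (i + 1) then 1 else 0) =
        (if x = w i then 1 else 0) + (if x = w (i + 1) then 1 else 0) := by
    intro i hi
    have := hstep i (Finset.mem_range.1 hi)
    split_ifs <;> simp_all [eq_comm]
  simp only [Finset.card_filter]
  rw [Finset.sum_congr rfl hsplit, Finset.sum_add_distrib, two_mul]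
  congr 1
  · rw [Finset.sum_range_succ, if_neg hm, add_zero]
  · rw [Finset.sum_range_succ', if_neg h₀, add_zero]

theorem face_path_from_to_even_incidence_general
    {Faces Volumes : Type*} [DecidableEq Volumes]
    (ι : Faces → Finset Volumes)
    (hcard : ∀ f, 1 ≤ (ι f).card ∧ (ι f).card ≤ 2)
    (m : ℕ) (p : FacePath ι m) (ν₀ νm : Volumes)
    (hft : p.FromTo ν₀ νm) :
    ∀ ν : Volumes, ν ≠ ν₀ → ν ≠ νm →
      Even (((Finset.range m).filter (fun i => ν ∈ ι (p.f i))).card) := by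
  intro ν hν₀ hνm
  have hface (i : ℕ) (hi : i ∈ Finset.range m) :
      ι (p.f i) = {p.volumeWalk ν₀ νm i, p.volumeWalk ν₀ νm (i + 1)} := by
    rw [Finset.mem_range] at hi
    exact Finset.eq_pair_of_card_le_two (hcard _).2 (p.volumeWalk_mem_left hft hi)
      (p.volumeWalk_mem_right hft hi) (p.volumeWalk_ne_succ hft hi)
  rw [Finset.filter_congr fun i hi => by rw [hface i hi, Finset.mem_insert, Finset.mem_singleton],
    card_filter_range_step_eq_two_mul (p.volumeWalk ν₀ νm) m
      (fun _ hi => p.volumeWalk_ne_succ hft hi)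
      (by rwa [p.volumeWalk_zero]) (by rwa [p.volumeWalk_length])]
  exact even_two_mul _

/-- Remark 4: along a face path from a volume `ν₀` to a volume `νm`, every volume other
than `ν₀` and `νm` is incident on an even number of faces of the path. -/
theorem face_path_from_to_even_incidence
    {Faces Volumes : Type*} [Fintype Faces] [Fintype Volumes] [DecidableEq Volumes]
    (ι : Faces → Finset Volumes)
    (hcard : ∀ f, 1 ≤ (ι f).card ∧ (ι f).card ≤ 2)
    (m : ℕ) (p : FacePath ι m) (ν₀ νm : Volumes)
    (hft : p.FromTo ν₀ νm) :
    ∀ ν : Volumes, ν ≠ ν₀ → ν ≠ νm →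
      Even (((Finset.range m).filter (fun i => ν ∈ ι (p.f i))).card) :=
  face_path_from_to_even_incidence_general ι hcard m p ν₀ νm hft
end
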